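/- arXiv:1803.06878 — 2 statements merged into one kernel-verified Lean document; each statement's English description precedes it below -/
import Mathlib

section
/- Let G be a finite simple graph, v a vertex of G, and let G' be obtained from G by adding k+1 new vertices each adjacent only to v (pendant vertices). Then every vertex cover U of G' with fair cost at most k (i.e., |N_{G'}(w) ∩ U| ≤ k for all vertices w of G') must contain v. -/
/-- Attaching `k+1` pendant vertices to `v` forces `v` into every vertex cover of
fair cost at most `k`.  The graph `G'` on `V ⊕ Fin (k+1)` consists of `G` on the
`inl` part together with the `k+1` pendant vertices `inr i`, each adjacent only to `v`. -/
theorem stmt_2 {V : Type*} [Fintype V] (G : SimpleGraph V) (v : V) (k : ℕ)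
    (G' : SimpleGraph (V ⊕ Fin (k + 1)))
    (hG' : ∀ x y : V ⊕ Fin (k + 1), G'.Adj x y ↔
      ((∃ a b : V, x = Sum.inl a ∧ y = Sum.inl b ∧ G.Adj a b) ∨
       (∃ i : Fin (k + 1), x = Sum.inl v ∧ y = Sum.inr i) ∨
       (∃ i : Fin (k + 1), x = Sum.inr i ∧ y = Sum.inl v)))
    (U : Set (V ⊕ Fin (k + 1)))
    (hcover : ∀ ⦃x y : V ⊕ Fin (k + 1)⦄, G'.Adj x y → x ∈ U ∨ y ∈ U)
    (hfair : ∀ w : V ⊕ Fin (k + 1), (G'.neighborSet w ∩ U).ncard ≤ k) :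
    Sum.inl v ∈ U := by
  by_contra h
  have hadj : ∀ i : Fin (k + 1), G'.Adj (Sum.inl v) (Sum.inr i) := by
    intro i
    rw [hG']
    exact Or.inr (Or.inl ⟨i, rfl, rfl⟩)
  have hmem : ∀ i : Fin (k + 1), Sum.inr i ∈ U := by
    intro i
    rcases hcover (hadj i) with h' | h'
    · exact absurd h' h
    · exact h'
  have hsub : Set.range (Sum.inr : Fin (k + 1) → V ⊕ Fin (k + 1)) ⊆
      G'.neighborSet (Sum.inl v) ∩ U := by
    rintro x ⟨i, rfl⟩
    exact ⟨hadj i, hmem i⟩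
  have hcard : k + 1 ≤ (G'.neighborSet (Sum.inl v) ∩ U).ncard := by
    have := Set.ncard_le_ncard hsub (Set.toFinite _)
    rwa [show Set.range (Sum.inr : Fin (k+1) → V ⊕ Fin (k+1)) = Sum.inr '' Set.univ by simp,
      Set.ncard_image_of_injective _ Sum.inr_injective, Set.ncard_univ, Nat.card_eq_fintype_card,
      Fintype.card_fin] at this
  have := hfair (Sum.inl v)
  omega
end

section
/- Let K be a twin cover of a finite simple graph G and let u, v be vertices outside K lying in the same connected component of G − K. Then N(u) ∩ K = N(v) ∩ K. -/
/-- If `K` is a twin cover of `G` and `u, v ∉ K` lie in the same connected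
component of `G − K`, then `N(u) ∩ K = N(v) ∩ K`. -/
theorem stmt_5 {V : Type*} [Fintype V] (G : SimpleGraph V) (K : Set V)
    (hK : ∀ ⦃u v : V⦄, G.Adj u v → u ∉ K → v ∉ K →
      G.neighborSet u \ {v} = G.neighborSet v \ {u}) :
    ∀ u v : ↥(Kᶜ), (SimpleGraph.induce (Kᶜ : Set V) G).Reachable u v →
      G.neighborSet ↑u ∩ K = G.neighborSet ↑v ∩ K := by
  have key : ∀ a b : V, G.Adj a b → a ∉ K → b ∉ K →
      G.neighborSet a ∩ K = G.neighborSet b ∩ K := by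
    intro a b hab ha hb
    have h := hK hab ha hb
    ext x
    simp only [Set.mem_inter_iff, SimpleGraph.mem_neighborSet]
    constructor
    · rintro ⟨hx, hxK⟩
      have : x ∈ G.neighborSet a \ {b} :=
        ⟨hx, fun h' => hb (by simpa using h' ▸ hxK)⟩
      rw [h] at this
      exact ⟨this.1, hxK⟩
    · rintro ⟨hx, hxK⟩
      have : x ∈ G.neighborSet b \ {a} :=
        ⟨hx, fun h' => ha (by simpa using h' ▸ hxK)⟩
      rw [← h] at this
      exact ⟨this.1, hxK⟩
  intro u v h
  obtain ⟨w⟩ := h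
  induction w with
  | nil => rfl
  | cons hadj p ih =>
    rename_i a b c
    have hab : G.Adj ↑a ↑b := by
      simpa [SimpleGraph.induce] using hadj
    exact (key _ _ hab a.2 b.2).trans ih
end
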